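/- Let ν be a measure on (0,∞) with ∫₀^∞ (x ∧ 1) ν(dx) < ∞, let b ≥ 0, and define φ(u) = b u + ∫₀^∞ (1 - e^{-u x}) ν(dx). Define σ₀ = sup{α ≥ 0 : lim_{u→0+} φ(u)/u^α = 0}. Then σ₀ = sup{α ≥ 0 : limsup_{u→0+} φ(u)/u^α < ∞} = sup{ρ ∈ [0,1] : ∫_{(1,∞)} x^ρ ν(dx) < ∞}. -/

import Mathlib

/-!
Since `1 - e^{-s}` lies between `min s 1 / 2` and `min s 1`, three estimates on
`φ u = b u + ∫ (1 - e^{-ux}) ν(dx)` near `0` drive the proof.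
* For non-trivial `φ`, `φ u ≥ c u` with `c > 0`, so `φ u / u ^ α` can stay bounded only if `α ≤ 1`.
* If `ρ ≤ 1` and `∫_{(1,∞)} x^ρ dν < ∞`, then `min (u x) 1 ≤ u^ρ min x (x^ρ)` for `u ≤ 1` gives
  `φ u ≤ K u^ρ`, hence `φ u / u^α → 0` for every `α < ρ`.
* If `φ u ≤ M u^γ`, then `ν (t, ∞) ≤ 2 φ (1/t) ≤ 2 M t^{-γ}`, and the layer-cake formula turns
  this tail bound into `∫_{(1,∞)} x^ρ dν < ∞` for every `ρ < γ`.
-/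

open MeasureTheory Set Real Filter Topology

noncomputable def levyIntegral (ν : Measure ℝ) (u : ℝ) : ℝ :=
  ∫ x in Ioi 0, (1 - exp (-u * x)) ∂ν

lemma one_sub_exp_neg_nonneg {s : ℝ} (hs : 0 ≤ s) : 0 ≤ 1 - exp (-s) :=
  sub_nonneg.2 (exp_le_one_iff.2 (neg_nonpos.2 hs))

lemma one_sub_exp_neg_mul_nonneg {u x : ℝ} (hu : 0 ≤ u) (hx : 0 ≤ x) : 0 ≤ 1 - exp (-u * x) := by
  rw [neg_mul]; exact one_sub_exp_neg_nonneg (mul_nonneg hu hx)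

lemma one_sub_exp_neg_le_min_one (s : ℝ) : 1 - exp (-s) ≤ min s 1 :=
  le_min (by linarith [one_sub_le_exp_neg s]) (by linarith [exp_pos (-s)])

lemma min_one_div_two_le_one_sub_exp_neg {s : ℝ} (hs : 0 ≤ s) : min s 1 / 2 ≤ 1 - exp (-s) := by
  have hexp : exp (-s) ≤ (1 + s)⁻¹ := by
    rw [exp_neg]
    exact inv_anti₀ (by linarith) (by linarith [add_one_le_exp s])
  have hinv : (1 + s)⁻¹ ≤ 1 - min s 1 / 2 := by
    rw [inv_le_iff_one_le_mul₀ (by linarith)]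
    nlinarith [min_le_left s 1, min_le_right s 1, le_min hs zero_le_one]
  linarith

lemma min_one_le_rpow {s ρ : ℝ} (hs : 0 ≤ s) (hρ0 : 0 ≤ ρ) (hρ1 : ρ ≤ 1) : min s 1 ≤ s ^ ρ := by
  rcases le_total s 1 with h | h
  · exact (min_le_left s 1).trans (self_le_rpow_of_le_one hs h hρ1)
  · exact (min_le_right s 1).trans (one_le_rpow h hρ0)

lemma min_mul_one_le_rpow_mul_min_rpow {u x ρ : ℝ} (hu : 0 ≤ u) (hu1 : u ≤ 1) (hx : 0 ≤ x)
    (hρ0 : 0 ≤ ρ) (hρ1 : ρ ≤ 1) : min (u * x) 1 ≤ u ^ ρ * min x (x ^ ρ) := by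
  rw [mul_min_of_nonneg _ _ (rpow_nonneg hu ρ), ← mul_rpow hu hx]
  exact le_min ((min_le_left _ _).trans (by gcongr; exact self_le_rpow_of_le_one hu hu1 hρ1))
    (min_one_le_rpow (mul_nonneg hu hx) hρ0 hρ1)

lemma Real.sSup_le_sSup_of_forall_Ico_exists_le {s t : Set ℝ} (ht : BddAbove t) (ht0 : 0 ≤ sSup t)
    (h : ∀ x ∈ s, ∀ y ∈ Ico 0 x, ∃ z ∈ t, y ≤ z) : sSup s ≤ sSup t := by
  refine Real.sSup_le (fun x hx => le_of_forall_lt_imp_le_of_dense fun y hy => ?_) ht0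
  rcases lt_or_ge y 0 with hy0 | hy0
  · exact hy0.le.trans ht0
  · obtain ⟨z, hz, hyz⟩ := h x hx y ⟨hy0, hy⟩
    exact hyz.trans (le_csSup ht hz)

lemma tendsto_rpow_nhdsGT_zero {p : ℝ} (hp : 0 < p) :
    Tendsto (fun u : ℝ => u ^ p) (𝓝[>] 0) (𝓝 0) := by
  simpa [zero_rpow hp.ne'] using
    (continuousAt_rpow_const 0 p (Or.inr hp.le)).tendsto.mono_left nhdsWithin_le_nhds

lemma le_one_of_isBoundedUnder_div_rpow {f : ℝ → ℝ} {c γ : ℝ} (hc : 0 < c)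
    (hf : ∀ᶠ u in 𝓝[>] 0, c * u ≤ f u)
    (hbdd : IsBoundedUnder (· ≤ ·) (𝓝[>] 0) fun u => f u / u ^ γ) : γ ≤ 1 := by
  by_contra! hγ
  obtain ⟨M, hM⟩ := hbdd
  have hlim : Tendsto (fun u => M * u ^ (γ - 1)) (𝓝[>] 0) (𝓝 0) := by
    simpa using (tendsto_rpow_nhdsGT_zero (sub_pos.2 hγ)).const_mul M
  have hcM : ∀ᶠ u in 𝓝[>] 0, c ≤ M * u ^ (γ - 1) := by
    filter_upwards [hf, eventually_map.1 hM, self_mem_nhdsWithin] with u hfu hMu (hu : 0 < u)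
    rw [div_le_iff₀ (rpow_pos_of_pos hu γ)] at hMu
    rw [rpow_sub hu, rpow_one, mul_div_assoc', le_div_iff₀ hu]
    exact hfu.trans hMu
  exact hc.not_ge (ge_of_tendsto hlim hcM)

lemma tendsto_div_rpow_of_le_rpow {f : ℝ → ℝ} {K ρ α : ℝ} (hα : α < ρ)
    (hf0 : ∀ᶠ u in 𝓝[>] 0, 0 ≤ f u) (hf : ∀ᶠ u in 𝓝[>] 0, f u ≤ K * u ^ ρ) :
    Tendsto (fun u => f u / u ^ α) (𝓝[>] 0) (𝓝 0) := by
  have hlim : Tendsto (fun u => K * u ^ (ρ - α)) (𝓝[>] 0) (𝓝 0) := by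
    simpa using (tendsto_rpow_nhdsGT_zero (sub_pos.2 hα)).const_mul K
  refine squeeze_zero' ?_ ?_ hlim
  · filter_upwards [hf0, self_mem_nhdsWithin] with u hfu (hu : 0 < u)
    positivity
  · filter_upwards [hf, self_mem_nhdsWithin] with u hfu (hu : 0 < u)
    rwa [div_le_iff₀ (rpow_pos_of_pos hu α), mul_assoc, ← rpow_add hu, sub_add_cancel]

lemma levyIntegral_nonneg (ν : Measure ℝ) {u : ℝ} (hu : 0 ≤ u) : 0 ≤ levyIntegral ν u :=
  setIntegral_nonneg measurableSet_Ioi fun _ hx => one_sub_exp_neg_mul_nonneg hu (le_of_lt hx)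

lemma exists_measure_Ioi_ne_zero {ν : Measure ℝ} (h : ν (Ioi 0) ≠ 0) : ∃ ε > 0, ν (Ioi ε) ≠ 0 := by
  have hIoi : Ioi (0 : ℝ) = ⋃ n : ℕ, Ioi (1 / ((n : ℝ) + 1)) := by
    ext x
    simp only [mem_Ioi, mem_iUnion]
    exact ⟨exists_nat_one_div_lt, fun ⟨n, hn⟩ => lt_trans (by positivity) hn⟩
  rw [hIoi, Ne, measure_iUnion_null_iff, not_forall] at h
  obtain ⟨n, hn⟩ := h
  exact ⟨_, by positivity, hn⟩

section LevyMeasure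

variable {ν : Measure ℝ} (hν : IntegrableOn (fun x => min x 1) (Ioi 0) ν)
include hν

lemma measure_Ioi_lt_top {t : ℝ} (ht : 0 < t) : ν (Ioi t) < ⊤ := by
  have hconst : IntegrableOn (fun _ => min t 1) (Ioi t) ν :=
    (hν.mono_set (Ioi_subset_Ioi ht.le)).mono' aestronglyMeasurable_const <|
      (ae_restrict_mem measurableSet_Ioi).mono fun x (hx : t < x) => by
        rw [norm_of_nonneg (le_min ht.le zero_le_one)]
        exact min_le_min_right 1 hx.le
  exact ((integrableOn_const_iff (by simp)).1 hconst).resolve_left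
    (by simpa using (lt_min ht one_pos).ne')

lemma integrableOn_one_sub_exp {u : ℝ} (hu : 0 ≤ u) :
    IntegrableOn (fun x => 1 - exp (-u * x)) (Ioi 0) ν :=
  (hν.const_mul (max u 1)).mono' (by fun_prop : Continuous _).aestronglyMeasurable <|
    (ae_restrict_mem measurableSet_Ioi).mono fun x (hx : 0 < x) => by
      rw [neg_mul, norm_of_nonneg (one_sub_exp_neg_nonneg (by positivity))]
      calc 1 - exp (-(u * x)) ≤ min (u * x) 1 := one_sub_exp_neg_le_min_one _
        _ ≤ min (max u 1 * x) (max u 1) :=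
          min_le_min (by gcongr; exact le_max_left u 1) (le_max_right u 1)
        _ = max u 1 * min x 1 := by rw [mul_min_of_nonneg _ _ (by positivity), mul_one]

lemma ofReal_mul_measure_le_levyIntegral {u a : ℝ} (hu : 0 ≤ u) {s : Set ℝ} (hs : s ⊆ Ioi 0)
    (ha : ∀ x ∈ s, a ≤ 1 - exp (-u * x)) :
    ENNReal.ofReal a * ν s ≤ ENNReal.ofReal (levyIntegral ν u) := by
  have hnonneg : 0 ≤ᵐ[ν.restrict (Ioi 0)] fun x => 1 - exp (-u * x) :=
    (ae_restrict_mem measurableSet_Ioi).mono fun _ hx => one_sub_exp_neg_mul_nonneg hu (le_of_lt hx)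
  rw [levyIntegral, ofReal_integral_eq_lintegral_ofReal (integrableOn_one_sub_exp hν hu) hnonneg,
    ← setLIntegral_const]
  calc ∫⁻ _ in s, ENNReal.ofReal a ∂ν ≤ ∫⁻ x in s, ENNReal.ofReal (1 - exp (-u * x)) ∂ν :=
        setLIntegral_mono (by fun_prop) fun x hx => ENNReal.ofReal_le_ofReal (ha x hx)
    _ ≤ _ := lintegral_mono_set hs

lemma measure_Ioi_le_ofReal_two_mul_levyIntegral {t : ℝ} (ht : 0 < t) :
    ν (Ioi t) ≤ ENNReal.ofReal (2 * levyIntegral ν t⁻¹) := by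
  have hhalf := ofReal_mul_measure_le_levyIntegral hν (a := 1 / 2) (inv_nonneg.2 ht.le)
    (Ioi_subset_Ioi ht.le) fun x (hx : t < x) => by
      have hx1 : 1 ≤ t⁻¹ * x := by rw [inv_mul_eq_div, one_le_div ht]; exact hx.le
      have := min_one_div_two_le_one_sub_exp_neg (zero_le_one.trans hx1)
      rwa [min_eq_right hx1, ← neg_mul] at this
  calc ν (Ioi t) = ENNReal.ofReal 2 * (ENNReal.ofReal (1 / 2) * ν (Ioi t)) := by
        rw [← mul_assoc, ← ENNReal.ofReal_mul zero_le_two]; norm_num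
    _ ≤ ENNReal.ofReal 2 * ENNReal.ofReal (levyIntegral ν t⁻¹) := by gcongr
    _ = ENNReal.ofReal (2 * levyIntegral ν t⁻¹) := (ENNReal.ofReal_mul zero_le_two).symm

lemma exists_pos_mul_le_levyIntegral (h : ν (Ioi 0) ≠ 0) :
    ∃ c > 0, ∀ᶠ u in 𝓝[>] 0, c * u ≤ levyIntegral ν u := by
  obtain ⟨ε, hε, hνε⟩ := exists_measure_Ioi_ne_zero h
  have hm : 0 < (ν (Ioi ε)).toReal := ENNReal.toReal_pos hνε (measure_Ioi_lt_top hν hε).ne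
  refine ⟨ε * (ν (Ioi ε)).toReal / 2, by positivity, ?_⟩
  filter_upwards [Ioo_mem_nhdsGT (inv_pos.2 hε)] with u ⟨hu, huε⟩
  have huε1 : u * ε ≤ 1 := by rw [← le_div_iff₀ hε, one_div]; exact huε.le
  have hbound := ofReal_mul_measure_le_levyIntegral hν (a := u * ε / 2) hu.le
    (Ioi_subset_Ioi hε.le) fun x (hx : ε < x) => by
      have := min_one_div_two_le_one_sub_exp_neg (mul_nonneg hu.le (hε.trans hx).le)
      rw [← neg_mul] at this
      refine le_trans ?_ this
      gcongr
      exact le_min (by gcongr) huε1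
  have hreal := ENNReal.toReal_mono ENNReal.ofReal_ne_top hbound
  rw [ENNReal.toReal_mul, ENNReal.toReal_ofReal (by positivity),
    ENNReal.toReal_ofReal (levyIntegral_nonneg ν hu.le)] at hreal
  linarith

lemma integrableOn_min_rpow {ρ : ℝ} (hρ : IntegrableOn (fun x => x ^ ρ) (Ioi 1) ν) :
    IntegrableOn (fun x => min x (x ^ ρ)) (Ioi 0) ν := by
  have hmeas : AEStronglyMeasurable (fun x : ℝ => min x (x ^ ρ)) ν :=
    (measurable_id.min (measurable_id.pow_const ρ)).aestronglyMeasurable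
  rw [← Ioc_union_Ioi_eq_Ioi zero_le_one]
  refine IntegrableOn.union ?_ ?_
  · refine (hν.mono_set Ioc_subset_Ioi_self).mono' hmeas.restrict <|
      (ae_restrict_mem measurableSet_Ioc).mono fun x ⟨hx0, hx1⟩ => ?_
    rw [norm_of_nonneg (le_min hx0.le (rpow_nonneg hx0.le ρ)), min_eq_left hx1]
    exact min_le_left _ _
  · refine hρ.mono' hmeas.restrict <| (ae_restrict_mem measurableSet_Ioi).mono fun x hx => ?_
    have hx0 : 0 < x := one_pos.trans hx
    rw [norm_of_nonneg (le_min hx0.le (rpow_nonneg hx0.le ρ))]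
    exact min_le_right _ _

end LevyMeasure

lemma levyIntegral_le_rpow_mul {ν : Measure ℝ} {ρ u : ℝ} (hρ0 : 0 ≤ ρ) (hρ1 : ρ ≤ 1)
    (hK : IntegrableOn (fun x => min x (x ^ ρ)) (Ioi 0) ν) (hu : 0 ≤ u) (hu1 : u ≤ 1) :
    levyIntegral ν u ≤ u ^ ρ * ∫ x in Ioi 0, min x (x ^ ρ) ∂ν := by
  rw [levyIntegral, ← integral_const_mul]
  refine integral_mono_of_nonneg ((ae_restrict_mem measurableSet_Ioi).mono fun _ hx =>
      one_sub_exp_neg_mul_nonneg hu (le_of_lt hx)) (hK.const_mul _) ((ae_restrict_mem measurableSet_Ioi).mono fun x (hx : 0 < x) => ?_)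
  dsimp only
  rw [neg_mul]
  exact (one_sub_exp_neg_le_min_one _).trans
    (min_mul_one_le_rpow_mul_min_rpow hu hu1 hx.le hρ0 hρ1)

lemma lintegral_Ioi_one_rpow_lt_top {ν : Measure ℝ} (h1 : ν (Ioi 1) < ⊤) {T C α ρ : ℝ}
    (hT : 0 < T) (htail : ∀ t > T, ν (Ioi t) ≤ ENNReal.ofReal (C * t ^ (-α)))
    (hρ : 0 ≤ ρ) (hρα : ρ < α) :
    ∫⁻ x in Ioi 1, ENNReal.ofReal (x ^ ρ) ∂ν < ⊤ := by
  rcases hρ.eq_or_lt with rfl | hρ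
  · simpa using h1
  rw [lintegral_rpow_eq_lintegral_meas_lt_mul _
    ((ae_restrict_mem measurableSet_Ioi).mono fun x (hx : 1 < x) => zero_le_one.trans hx.le)
    measurable_id.aemeasurable hρ]
  refine ENNReal.mul_lt_top ENNReal.ofReal_lt_top <|
    (lintegral_mono_set (Ioc_union_Ioi_eq_Ioi hT.le).ge).trans_lt <|
      (lintegral_union_le _ _ _).trans_lt <| ENNReal.add_lt_top.2 ⟨?_, ?_⟩
  · calc ∫⁻ t in Ioc 0 T, ν.restrict (Ioi 1) {x | t < x} * ENNReal.ofReal (t ^ (ρ - 1))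
          ≤ ∫⁻ t in Ioc 0 T, ν (Ioi 1) * ENNReal.ofReal (t ^ (ρ - 1)) := by
            refine setLIntegral_mono (by fun_prop) fun t _ => mul_le_mul_left ?_ _
            exact (measure_mono (subset_univ _)).trans_eq (Measure.restrict_apply_univ _)
      _ = ν (Ioi 1) * ∫⁻ t in Ioc 0 T, ENNReal.ofReal (t ^ (ρ - 1)) :=
            lintegral_const_mul _ (by fun_prop)
      _ < ⊤ := ENNReal.mul_lt_top h1
            ((intervalIntegral.intervalIntegrable_rpow' (by linarith)).1.lintegral_lt_top)
  · calc ∫⁻ t in Ioi T, ν.restrict (Ioi 1) {x | t < x} * ENNReal.ofReal (t ^ (ρ - 1))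
          ≤ ∫⁻ t in Ioi T, ENNReal.ofReal (C * t ^ (ρ - α - 1)) := by
            refine setLIntegral_mono (by fun_prop) fun t (ht : T < t) => ?_
            have ht0 : 0 < t := hT.trans ht
            rw [show ρ - α - 1 = -α + (ρ - 1) by ring, rpow_add ht0, ← mul_assoc,
              ENNReal.ofReal_mul' (rpow_nonneg ht0.le _)]
            gcongr
            exact (Measure.restrict_apply_le _ _).trans (htail t ht)
      _ < ⊤ := ((integrableOn_Ioi_rpow_of_lt (by linarith) hT).const_mul C).lintegral_lt_top

section LaplaceExponent

variable {ν : Measure ℝ} {b : ℝ} {φ : ℝ → ℝ}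
  (hν : IntegrableOn (fun x => min x 1) (Ioi 0) ν) (hb : 0 ≤ b)
  (hφ : ∀ u > 0, φ u = b * u + levyIntegral ν u)
include hν hb hφ

lemma exists_pos_mul_le_of_eq_levyIntegral (hnontriv : 0 < b ∨ ν (Ioi 0) ≠ 0) :
    ∃ c > 0, ∀ᶠ u in 𝓝[>] 0, c * u ≤ φ u := by
  rcases hnontriv with hb' | hν0
  · refine ⟨b, hb', eventually_nhdsWithin_of_forall fun u (hu : 0 < u) => ?_⟩
    rw [hφ u hu]
    exact le_add_of_nonneg_right (levyIntegral_nonneg ν hu.le)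
  · obtain ⟨c, hc, hcψ⟩ := exists_pos_mul_le_levyIntegral hν hν0
    refine ⟨c, hc, ?_⟩
    filter_upwards [hcψ, self_mem_nhdsWithin] with u hcu (hu : 0 < u)
    rw [hφ u hu]
    exact le_add_of_nonneg_of_le (by positivity) hcu

lemma lintegral_rpow_lt_top_of_isBoundedUnder_div_rpow {γ ρ : ℝ}
    (hγ : IsBoundedUnder (· ≤ ·) (𝓝[>] 0) fun u => φ u / u ^ γ) (hρ : 0 ≤ ρ) (hργ : ρ < γ) :
    ∫⁻ x in Ioi 1, ENNReal.ofReal (x ^ ρ) ∂ν < ⊤ := by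
  obtain ⟨M, hM⟩ := hγ
  obtain ⟨δ, hδ, hMδ⟩ := mem_nhdsGT_iff_exists_Ioo_subset.1 (eventually_map.1 hM)
  refine lintegral_Ioi_one_rpow_lt_top (measure_Ioi_lt_top hν one_pos) (inv_pos.2 hδ)
    (C := 2 * M) (fun t ht => ?_) hρ hργ
  have ht0 : 0 < t := (inv_pos.2 hδ).trans ht
  have hu : t⁻¹ ∈ Ioo 0 δ := ⟨inv_pos.2 ht0, inv_lt_of_inv_lt₀ hδ ht⟩
  have hφM : φ t⁻¹ ≤ M * t ^ (-γ) := by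
    rw [rpow_neg ht0.le, ← inv_rpow ht0.le, ← div_le_iff₀ (rpow_pos_of_pos hu.1 γ)]
    exact hMδ hu
  have hψφ : levyIntegral ν t⁻¹ ≤ φ t⁻¹ := by
    rw [hφ _ hu.1]
    exact le_add_of_nonneg_left (mul_nonneg hb hu.1.le)
  refine (measure_Ioi_le_ofReal_two_mul_levyIntegral hν ht0).trans (ENNReal.ofReal_le_ofReal ?_)
  rw [mul_assoc]
  linarith

lemma tendsto_div_rpow_of_lintegral_rpow_lt_top {ρ α : ℝ} (hρ0 : 0 ≤ ρ) (hρ1 : ρ ≤ 1)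
    (hρ : ∫⁻ x in Ioi 1, ENNReal.ofReal (x ^ ρ) ∂ν < ⊤) (hα : α < ρ) :
    Tendsto (fun u => φ u / u ^ α) (𝓝[>] 0) (𝓝 0) := by
  have hρν : IntegrableOn (fun x => x ^ ρ) (Ioi 1) ν :=
    ⟨(measurable_id.pow_const ρ).aestronglyMeasurable, (hasFiniteIntegral_iff_ofReal <|
      (ae_restrict_mem measurableSet_Ioi).mono fun x (hx : 1 < x) =>
        rpow_nonneg (zero_le_one.trans hx.le) ρ).2 hρ⟩
  set K := ∫ x in Ioi 0, min x (x ^ ρ) ∂ν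
  refine tendsto_div_rpow_of_le_rpow (K := b + K) hα ?_ ?_
  · filter_upwards [self_mem_nhdsWithin] with u (hu : 0 < u)
    rw [hφ u hu]
    exact add_nonneg (mul_nonneg hb hu.le) (levyIntegral_nonneg ν hu.le)
  · filter_upwards [Ioo_mem_nhdsGT one_pos] with u ⟨hu, hu1⟩
    rw [hφ u hu, add_mul]
    gcongr
    · exact self_le_rpow_of_le_one hu.le hu1.le hρ1
    · rw [mul_comm]
      exact levyIntegral_le_rpow_mul hρ0 hρ1 (integrableOn_min_rpow hν hρν) hu.le hu1.le

end LaplaceExponent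

theorem subordinator_index_characterization (ν : Measure ℝ) (b : ℝ) (hb : 0 ≤ b)
    (hν : ∫⁻ x in Set.Ioi (0:ℝ), ENNReal.ofReal (min x 1) ∂ν < ⊤)
    (hnontriv : 0 < b ∨ ν (Set.Ioi (0:ℝ)) ≠ 0)
    (φ : ℝ → ℝ)
    (hφ : ∀ u > 0, φ u = b * u + ∫ x in Set.Ioi (0:ℝ), (1 - Real.exp (-u * x)) ∂ν) :
    sSup {α : ℝ | 0 ≤ α ∧ Tendsto (fun u => φ u / u ^ α) (nhdsWithin 0 (Set.Ioi 0)) (nhds 0)}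
      = sSup {α : ℝ | 0 ≤ α ∧
          IsBoundedUnder (· ≤ ·) (nhdsWithin 0 (Set.Ioi 0)) (fun u => φ u / u ^ α)} ∧
    sSup {α : ℝ | 0 ≤ α ∧ Tendsto (fun u => φ u / u ^ α) (nhdsWithin 0 (Set.Ioi 0)) (nhds 0)}
      = sSup {ρ : ℝ | 0 ≤ ρ ∧ ρ ≤ 1 ∧ ∫⁻ x in Set.Ioi (1:ℝ), ENNReal.ofReal (x ^ ρ) ∂ν < ⊤} := by
  have hν' : IntegrableOn (fun x => min x 1) (Ioi 0) ν :=
    ⟨by fun_prop, (hasFiniteIntegral_iff_ofReal <| (ae_restrict_mem measurableSet_Ioi).mono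
      fun x (hx : 0 < x) => le_min hx.le zero_le_one).2 hν⟩
  set A := {α : ℝ | 0 ≤ α ∧ Tendsto (fun u => φ u / u ^ α) (𝓝[>] 0) (𝓝 0)}
  set B := {α : ℝ | 0 ≤ α ∧ IsBoundedUnder (· ≤ ·) (𝓝[>] 0) (fun u => φ u / u ^ α)}
  set C := {ρ : ℝ | 0 ≤ ρ ∧ ρ ≤ 1 ∧ ∫⁻ x in Ioi 1, ENNReal.ofReal (x ^ ρ) ∂ν < ⊤}
  have hAB : A ⊆ B := fun α hα => ⟨hα.1, hα.2.isBoundedUnder_le⟩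
  have hB1 : ∀ γ ∈ B, γ ≤ 1 := by
    obtain ⟨c, hc, hcφ⟩ := exists_pos_mul_le_of_eq_levyIntegral hν' hb hφ hnontriv
    exact fun γ hγ => le_one_of_isBoundedUnder_div_rpow hc hcφ hγ.2
  have hsSupAB : sSup A ≤ sSup B :=
    Real.sSup_le_sSup_of_forall_Ico_exists_le ⟨1, hB1⟩ (Real.sSup_nonneg fun _ h => h.1)
      fun α hα _ hy => ⟨α, hAB hα, hy.2.le⟩
  have hsSupBC : sSup B ≤ sSup C :=
    Real.sSup_le_sSup_of_forall_Ico_exists_le ⟨1, fun _ h => h.2.1⟩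
      (Real.sSup_nonneg fun _ h => h.1) fun γ hγ ρ hρ => ⟨ρ, ⟨hρ.1, hρ.2.le.trans (hB1 γ hγ),
        lintegral_rpow_lt_top_of_isBoundedUnder_div_rpow hν' hb hφ hγ.2 hρ.1 hρ.2⟩, le_rfl⟩
  have hsSupCA : sSup C ≤ sSup A :=
    Real.sSup_le_sSup_of_forall_Ico_exists_le ⟨1, fun α hα => hB1 α (hAB hα)⟩
      (Real.sSup_nonneg fun _ h => h.1) fun ρ hρ α hα => ⟨α, ⟨hα.1,
        tendsto_div_rpow_of_lintegral_rpow_lt_top hν' hb hφ hρ.1 hρ.2.1 hρ.2.2 hα.2⟩, le_rfl⟩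
  exact ⟨hsSupAB.antisymm (hsSupBC.trans hsSupCA), (hsSupAB.trans hsSupBC).antisymm hsSupCA⟩
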